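/- Let d ≥ 5 and t an integer with gcd(1+t, d) = gcd(2+t, d) = gcd(1+t, 2+t) = 1 and 3+2t ≢ 0 (mod d). Let T_l = Conv(((1+t)/d, 1/d), ((1+t)/d, 0), (t/d, 1/d)) and T_r = Conv(((2+t)/d, 1/d), ((2+t)/d, 0), ((1+t)/d, 1/d)). Then the counterclockwise edge-weight multisets W_d(T_l) = {1+t, 1, −1−t} and W_d(T_r) = {2+t, 1, −2−t} (mod d) are distinct; consequently T_l and T_r are not G-equivalent. -/

import Mathlib

noncomputable section

/-- The lattice `(1/d)ℤ × (1/d)ℤ` inside `ℝ × ℝ`. -/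
def Ld (d : ℕ) : Set (ℝ × ℝ) :=
  {p | ∃ a b : ℤ, p = ((a : ℝ) / d, (b : ℝ) / d)}

/-- A `d`-minimal triangle: vertices in `L_d`, not collinear, and the closed triangle
meets `L_d` exactly in its three vertices. -/
def IsMinimalTriangle (d : ℕ) (p q r : ℝ × ℝ) : Prop :=
  p ∈ Ld d ∧ q ∈ Ld d ∧ r ∈ Ld d ∧
    ¬ Collinear ℝ ({p, q, r} : Set (ℝ × ℝ)) ∧
    convexHull ℝ ({p, q, r} : Set (ℝ × ℝ)) ∩ Ld d = {p, q, r}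

/-- An element of `G = GL₂(ℤ) ⋉ ℤ²`: an integer matrix `[[a,b],[c,e]]` of determinant
`±1` together with an integer translation vector `(v1, v2)`. -/
structure GMap where
  a : ℤ
  b : ℤ
  c : ℤ
  e : ℤ
  v1 : ℤ
  v2 : ℤ
  unimod : a * e - b * c = 1 ∨ a * e - b * c = -1

/-- The affine action `x ↦ Ux + v` of a `GMap` on `ℝ²`. -/
def GMap.app (g : GMap) (p : ℝ × ℝ) : ℝ × ℝ :=
  ((g.a : ℝ) * p.1 + (g.b : ℝ) * p.2 + (g.v1 : ℝ),
   (g.c : ℝ) * p.1 + (g.e : ℝ) * p.2 + (g.v2 : ℝ))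

/-- A `d`-minimal segment: endpoints in `L_d`, distinct, and the closed segment meets
`L_d` exactly in its two endpoints. -/
def IsMinimalSegment (d : ℕ) (p q : ℝ × ℝ) : Prop :=
  p ∈ Ld d ∧ q ∈ Ld d ∧ p ≠ q ∧ segment ℝ p q ∩ Ld d = {p, q}

/-- The point of `L_d` with integer numerator data `p : ℤ × ℤ`. -/
def pt (d : ℕ) (p : ℤ × ℤ) : ℝ × ℝ := ((p.1 : ℝ) / d, (p.2 : ℝ) / d)

/-- Counterclockwise orientation of the ordered triple of numerator data. -/
def ccwZ (p q r : ℤ × ℤ) : Prop :=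
  0 < (q.1 - p.1) * (r.2 - p.2) - (q.2 - p.2) * (r.1 - p.1)

/-- Weight (mod `d`) of the oriented minimal segment from `(w/d, x/d)` to `(y/d, z/d)`,
given by numerator data `(w,x)` and `(y,z)`. -/
def segWeight (d : ℕ) (p q : ℤ × ℤ) : ZMod d :=
  ((p.1 * q.2 - p.2 * q.1 : ℤ) : ZMod d)

/-- The multiset of weights of the three edges `p→q`, `q→r`, `r→p` of a triangle
given by numerator data. -/
def triWeight (d : ℕ) (p q r : ℤ × ℤ) : Multiset (ZMod d) :=
  {segWeight d p q, segWeight d q r, segWeight d r p}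

/-!
An element `x ↦ Ux + v` of `G` sends the point with numerators `p` to the point with numerators
`Up + dv`, so it multiplies every edge weight by `det U = ±1` modulo `d`; relabelling the vertices
of a triangle only reverses some edges, which negates their weights. Hence the multiset of
squared edge weights is a `G`-invariant of lattice triangles, the vertices being recovered from
the hull as its extreme points. For `T_l` and `T_r` these multisets are `{(1+t)², 1, (1+t)²}`
and `{(2+t)², 1, (2+t)²}`, and their equality would force `(2+t)² - (1+t)² = 3 + 2t ≡ 0 mod d`.
-/

theorem mem_extremePoints_convexHull_insert {E : Type*} [AddCommGroup E] [Module ℝ E]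
    {x : E} {s : Set E} (hx : x ∉ convexHull ℝ s) :
    x ∈ (convexHull ℝ (insert x s)).extremePoints ℝ := by
  rcases s.eq_empty_or_nonempty with rfl | hs
  · simp
  refine mem_extremePoints_iff_left.2 ⟨subset_convexHull ℝ _ (Set.mem_insert x s), ?_⟩
  rintro y hy z hz ⟨θ, θ', hθ, hθ', hθθ', hxyz⟩
  rw [convexHull_insert hs, mem_convexJoin] at hy hz
  obtain ⟨x₁, hx₁, y', hy', α', α, hα', hα, hαα, rfl⟩ := hy
  obtain ⟨x₂, hx₂, z', hz', β', β, hβ', hβ, hββ, rfl⟩ := hz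
  rw [Set.mem_singleton_iff] at hx₁ hx₂
  subst x₁ x₂
  obtain rfl | hα0 := hα.eq_or_lt
  · simp [show α' = 1 by linarith]
  refine absurd ?_ hx
  have hsum : 0 < θ * α + θ' * β := by positivity
  -- otherwise `x` is a proper convex combination of `y', z' ∈ convexHull s`
  have hcomb : (θ * α + θ' * β) • x = (θ * α) • y' + (θ' * β) • z' := by
    obtain rfl : α' = 1 - α := by linarith
    obtain rfl : β' = 1 - β := by linarith
    obtain rfl : θ' = 1 - θ := by linarith
    linear_combination (norm := module) -hxyz
  convert convex_iff_div.1 (convex_convexHull ℝ s) hy' hz' (by positivity) (by positivity) hsum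
  rw [div_eq_inv_mul, div_eq_inv_mul, mul_smul _ (θ * α), mul_smul _ (θ' * β), ← smul_add,
    ← hcomb, inv_smul_smul₀ hsum.ne']

theorem subset_extremePoints_convexHull_of_not_collinear {E : Type*} [AddCommGroup E]
    [Module ℝ E] {a b c : E} (h : ¬ Collinear ℝ ({a, b, c} : Set E)) :
    ({a, b, c} : Set E) ⊆ (convexHull ℝ {a, b, c}).extremePoints ℝ := by
  have vertex : ∀ {a b c : E}, ¬ Collinear ℝ ({a, b, c} : Set E) →
      a ∈ (convexHull ℝ {a, b, c}).extremePoints ℝ := fun h =>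
    mem_extremePoints_convexHull_insert fun ha =>
      h (collinear_insert_of_mem_affineSpan_pair (convexHull_subset_affineSpan _ ha))
  have hbac : ({a, b, c} : Set E) = {b, a, c} := Set.insert_comm a b {c}
  have hcab : ({a, b, c} : Set E) = {c, a, b} := by
    rw [Set.pair_comm b c, Set.insert_comm a c {b}]
  rintro x (rfl | rfl | rfl)
  · exact vertex h
  · rw [hbac] at h ⊢; exact vertex h
  · rw [hcab] at h ⊢; exact vertex h

theorem not_collinear_of_cross_ne_zero {p q r : ℝ × ℝ}
    (h : (q.1 - p.1) * (r.2 - p.2) - (q.2 - p.2) * (r.1 - p.1) ≠ 0) :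
    ¬ Collinear ℝ ({p, q, r} : Set (ℝ × ℝ)) := by
  rw [collinear_iff_of_mem (Set.mem_insert p _)]
  rintro ⟨v, hv⟩
  obtain ⟨s, rfl⟩ := hv q (by simp)
  obtain ⟨u, rfl⟩ := hv r (by simp)
  apply h
  simp only [vadd_eq_add, Prod.fst_add, Prod.snd_add, Prod.smul_fst, Prod.smul_snd, smul_eq_mul]
  ring

theorem pt_injective {d : ℕ} (hd : d ≠ 0) : Function.Injective (pt d) := by
  intro p q h
  simp only [pt, Prod.mk.injEq] at h
  obtain ⟨h1, h2⟩ := h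
  field_simp at h1 h2
  exact Prod.ext (by exact_mod_cast h1) (by exact_mod_cast h2)

theorem not_collinear_pt {d : ℕ} (hd : d ≠ 0) {p q r : ℤ × ℤ}
    (h : (q.1 - p.1) * (r.2 - p.2) - (q.2 - p.2) * (r.1 - p.1) ≠ 0) :
    ¬ Collinear ℝ ({pt d p, pt d q, pt d r} : Set (ℝ × ℝ)) := by
  apply not_collinear_of_cross_ne_zero
  have hcross : ((pt d q).1 - (pt d p).1) * ((pt d r).2 - (pt d p).2)
      - ((pt d q).2 - (pt d p).2) * ((pt d r).1 - (pt d p).1)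
      = ((((q.1 - p.1) * (r.2 - p.2) - (q.2 - p.2) * (r.1 - p.1) : ℤ) : ℝ)) / (d : ℝ) ^ 2 := by
    simp only [pt]
    push_cast
    ring
  rw [hcross]
  exact div_ne_zero (by exact_mod_cast h) (by positivity)

theorem segWeight_swap (d : ℕ) (p q : ℤ × ℤ) : segWeight d q p = -segWeight d p q := by
  simp only [segWeight]; push_cast; ring

theorem segWeight_sq_comm (d : ℕ) (p q : ℤ × ℤ) : segWeight d q p ^ 2 = segWeight d p q ^ 2 := by
  rw [segWeight_swap, neg_sq]

def sqWeights (d : ℕ) (p q r : ℤ × ℤ) : Multiset (ZMod d) :=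
  (triWeight d p q r).map (· ^ 2)

theorem sqWeights_rotate (d : ℕ) (p q r : ℤ × ℤ) : sqWeights d q r p = sqWeights d p q r := by
  simp only [sqWeights, triWeight, Multiset.insert_eq_cons, ← Multiset.cons_zero,
    Multiset.map_cons, Multiset.map_zero, Multiset.cons_swap]

theorem sqWeights_swap (d : ℕ) (p q r : ℤ × ℤ) : sqWeights d q p r = sqWeights d p q r := by
  simp only [sqWeights, triWeight, Multiset.insert_eq_cons, ← Multiset.cons_zero,
    Multiset.map_cons, Multiset.map_zero, Multiset.cons_swap, segWeight_sq_comm]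

theorem sqWeights_eq_of_subset {d : ℕ} {p q r p' q' r' : ℤ × ℤ} (hpq : p ≠ q) (hqr : q ≠ r)
    (hpr : p ≠ r) (h : ({p, q, r} : Set (ℤ × ℤ)) ⊆ {p', q', r'}) :
    sqWeights d p' q' r' = sqWeights d p q r := by
  simp only [Set.insert_subset_iff, Set.singleton_subset_iff, Set.mem_insert_iff,
    Set.mem_singleton_iff] at h
  obtain ⟨rfl | rfl | rfl, rfl | rfl | rfl, rfl | rfl | rfl⟩ := h <;>
    first
      | exact absurd rfl hpq
      | exact absurd rfl hqr
      | exact absurd rfl hpr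
      | rfl
      | exact sqWeights_rotate ..
      | exact (sqWeights_rotate ..).symm
      | exact sqWeights_swap ..
      | exact (sqWeights_swap ..).trans (sqWeights_rotate ..)
      | exact (sqWeights_rotate ..).trans (sqWeights_swap ..)

def GMap.numMap (g : GMap) (d : ℕ) (p : ℤ × ℤ) : ℤ × ℤ :=
  (g.a * p.1 + g.b * p.2 + d * g.v1, g.c * p.1 + g.e * p.2 + d * g.v2)

theorem GMap.app_pt (g : GMap) {d : ℕ} (hd : d ≠ 0) (p : ℤ × ℤ) :
    g.app (pt d p) = pt d (g.numMap d p) := by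
  simp only [GMap.app, GMap.numMap, pt, Prod.mk.injEq]
  push_cast
  constructor <;> field_simp

theorem GMap.segWeight_numMap (g : GMap) (d : ℕ) (p q : ℤ × ℤ) :
    segWeight d (g.numMap d p) (g.numMap d q) = (g.a * g.e - g.b * g.c : ℤ) * segWeight d p q := by
  simp only [segWeight, GMap.numMap]
  push_cast
  rw [ZMod.natCast_self]
  ring

theorem GMap.sqWeights_numMap (g : GMap) (d : ℕ) (p q r : ℤ × ℤ) :
    sqWeights d (g.numMap d p) (g.numMap d q) (g.numMap d r) = sqWeights d p q r := by
  have hdet : ((g.a * g.e - g.b * g.c : ℤ) : ZMod d) ^ 2 = 1 := by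
    rcases g.unimod with h | h <;> simp [h]
  simp only [sqWeights, triWeight, g.segWeight_numMap, Multiset.insert_eq_cons, Multiset.map_cons,
    Multiset.map_singleton, mul_pow, hdet, one_mul]

def GMap.toAffineMap (g : GMap) : ℝ × ℝ →ᵃ[ℝ] ℝ × ℝ where
  toFun := g.app
  linear := ((g.a : ℝ) • LinearMap.fst ℝ ℝ ℝ + (g.b : ℝ) • LinearMap.snd ℝ ℝ ℝ).prod
    ((g.c : ℝ) • LinearMap.fst ℝ ℝ ℝ + (g.e : ℝ) • LinearMap.snd ℝ ℝ ℝ)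
  map_vadd' p v := by
    ext <;> simp [GMap.app] <;> ring

theorem GMap.image_convexHull (g : GMap) (s : Set (ℝ × ℝ)) :
    g.app '' convexHull ℝ s = convexHull ℝ (g.app '' s) :=
  g.toAffineMap.image_convexHull s

theorem sqWeights_eq_of_image_convexHull_eq {d : ℕ} (hd : d ≠ 0) (g : GMap)
    {p q r p' q' r' : ℤ × ℤ}
    (hT : ¬ Collinear ℝ ({pt d p', pt d q', pt d r'} : Set (ℝ × ℝ)))
    (h : g.app '' convexHull ℝ {pt d p, pt d q, pt d r}
      = convexHull ℝ {pt d p', pt d q', pt d r'}) :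
    sqWeights d p q r = sqWeights d p' q' r' := by
  have hpq : p' ≠ q' := by
    rintro rfl; exact hT (by simpa using collinear_pair ℝ (pt d p') (pt d r'))
  have hqr : q' ≠ r' := by
    rintro rfl; exact hT (by simpa using collinear_pair ℝ (pt d p') (pt d q'))
  have hpr : p' ≠ r' := by
    rintro rfl; exact hT (by simpa [Set.pair_comm] using collinear_pair ℝ (pt d p') (pt d q'))
  have hsub : pt d '' {p', q', r'} ⊆ pt d '' {g.numMap d p, g.numMap d q, g.numMap d r} :=
    calc pt d '' {p', q', r'} = {pt d p', pt d q', pt d r'} := by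
          simp only [Set.image_insert_eq, Set.image_singleton]
      _ ⊆ (convexHull ℝ {pt d p', pt d q', pt d r'}).extremePoints ℝ :=
          subset_extremePoints_convexHull_of_not_collinear hT
      _ = (convexHull ℝ (g.app '' {pt d p, pt d q, pt d r})).extremePoints ℝ := by
          rw [← h, g.image_convexHull]
      _ ⊆ g.app '' {pt d p, pt d q, pt d r} := extremePoints_convexHull_subset
      _ = pt d '' {g.numMap d p, g.numMap d q, g.numMap d r} := by
          simp only [Set.image_insert_eq, Set.image_singleton, g.app_pt hd]
  rw [Set.image_subset_image_iff (pt_injective hd)] at hsub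
  rw [← g.sqWeights_numMap d, sqWeights_eq_of_subset hpq hqr hpr hsub]

theorem triWeight_of_sub_eq_one (d : ℕ) {x y : ℤ} (h : x - y = 1) :
    triWeight d (x, 0) (x, 1) (y, 1) = {(x : ZMod d), 1, ((-x : ℤ) : ZMod d)} := by
  simp only [triWeight, segWeight, mul_zero, mul_one, one_mul, zero_mul, sub_zero, zero_sub, h,
    Int.cast_one]

theorem eq_of_triple_multiset_eq {α : Type*} {a b c : α}
    (h : ({a, c, a} : Multiset α) = {b, c, b}) : a = b := by
  by_contra hab
  have hac : a = c := by
    simpa [hab] using (h ▸ Multiset.mem_cons_self a {c, a} : a ∈ ({b, c, b} : Multiset α))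
  have hbc : b = c := by
    simpa [hac] using (h.symm ▸ Multiset.mem_cons_self b {c, b} : b ∈ ({a, c, a} : Multiset α))
  exact hab (hac.trans hbc.symm)

theorem sqWeights_similar_neighbors_ne {d : ℕ} {t : ℤ} (h3 : ((3 + 2 * t : ℤ) : ZMod d) ≠ 0) :
    sqWeights d (1 + t, 0) (1 + t, 1) (t, 1) ≠ sqWeights d (2 + t, 0) (2 + t, 1) (1 + t, 1) := by
  intro h
  rw [sqWeights, sqWeights, triWeight_of_sub_eq_one d (by ring : 1 + t - t = 1),
    triWeight_of_sub_eq_one d (by ring : 2 + t - (1 + t) = 1)] at h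
  simp only [Multiset.insert_eq_cons, Multiset.map_cons, Multiset.map_singleton, Int.cast_neg,
    neg_sq, one_pow] at h
  have hsq := eq_of_triple_multiset_eq h
  apply h3
  push_cast at hsq ⊢
  linear_combination -hsq

theorem similar_neighbors_not_G_equiv_general (d : ℕ) (hd : 5 ≤ d) (t : ℤ)
    (h3 : ((3 + 2 * t : ℤ) : ZMod d) ≠ 0) :
    triWeight d (1 + t, 0) (1 + t, 1) (t, 1)
        = ({((1 + t : ℤ) : ZMod d), 1, ((-(1 + t) : ℤ) : ZMod d)} : Multiset (ZMod d)) ∧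
    triWeight d (2 + t, 0) (2 + t, 1) (1 + t, 1)
        = ({((2 + t : ℤ) : ZMod d), 1, ((-(2 + t) : ℤ) : ZMod d)} : Multiset (ZMod d)) ∧
    triWeight d (1 + t, 0) (1 + t, 1) (t, 1)
        ≠ triWeight d (2 + t, 0) (2 + t, 1) (1 + t, 1) ∧
    ¬ ∃ g : GMap,
        g.app '' convexHull ℝ
            ({pt d (1 + t, 1), pt d (1 + t, 0), pt d (t, 1)} : Set (ℝ × ℝ))
          = convexHull ℝ
            ({pt d (2 + t, 1), pt d (2 + t, 0), pt d (1 + t, 1)} : Set (ℝ × ℝ)) := by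
  have hne := sqWeights_similar_neighbors_ne h3
  refine ⟨triWeight_of_sub_eq_one d (by ring), triWeight_of_sub_eq_one d (by ring),
    fun h => hne (congrArg (Multiset.map (· ^ 2)) h), ?_⟩
  rintro ⟨g, h⟩
  have hT : ¬ Collinear ℝ ({pt d (2 + t, 1), pt d (2 + t, 0), pt d (1 + t, 1)} : Set (ℝ × ℝ)) :=
    not_collinear_pt (by omega) (by norm_num)
  have hsq := sqWeights_eq_of_image_convexHull_eq (by omega) g hT h
  rw [← sqWeights_swap, ← sqWeights_swap d (2 + t, 1)] at hsq
  exact hne hsq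

/-- for similar neighbors `T_l` and `T_r` (with the stated coprimality
conditions and `3 + 2t ≢ 0 mod d`), the counterclockwise edge-weight multisets are
`{1+t, 1, −1−t}` and `{2+t, 1, −2−t}` respectively, these multisets are distinct,
and consequently `T_l` and `T_r` are not `G`-equivalent. -/
theorem similar_neighbors_not_G_equiv (d : ℕ) (hd : 5 ≤ d) (t : ℤ)
    (h1 : Int.gcd (1 + t) (d : ℤ) = 1)
    (h2 : Int.gcd (2 + t) (d : ℤ) = 1)
    (h12 : Int.gcd (1 + t) (2 + t) = 1)
    (h3 : ((3 + 2 * t : ℤ) : ZMod d) ≠ 0) :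
    triWeight d (1 + t, 0) (1 + t, 1) (t, 1)
        = ({((1 + t : ℤ) : ZMod d), 1, ((-(1 + t) : ℤ) : ZMod d)} : Multiset (ZMod d)) ∧
    triWeight d (2 + t, 0) (2 + t, 1) (1 + t, 1)
        = ({((2 + t : ℤ) : ZMod d), 1, ((-(2 + t) : ℤ) : ZMod d)} : Multiset (ZMod d)) ∧
    triWeight d (1 + t, 0) (1 + t, 1) (t, 1)
        ≠ triWeight d (2 + t, 0) (2 + t, 1) (1 + t, 1) ∧
    ¬ ∃ g : GMap,
        g.app '' convexHull ℝ
            ({pt d (1 + t, 1), pt d (1 + t, 0), pt d (t, 1)} : Set (ℝ × ℝ))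
          = convexHull ℝ
            ({pt d (2 + t, 1), pt d (2 + t, 0), pt d (1 + t, 1)} : Set (ℝ × ℝ)) :=
  similar_neighbors_not_G_equiv_general d hd t h3
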